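/- arXiv:1608.02863 — 8 statements merged into one kernel-verified Lean document; each statement's English description precedes it below -/
import Mathlib

section
/- Fix natural numbers r' ≥ 1 and ℓ ≥ 1. Then the ratio of the mixed Moore bound M(2r', d−r', ℓ) to d^ℓ + d^{ℓ−1} tends to 1 as d → ∞; that is, the function d ↦ (Σ_{i=0}^{ℓ} (1 1) · [[2r'−1, 2r'],[d−r', d−r']]^i · (0 1)ᵀ) / (d^ℓ + d^{ℓ−1}), viewed as a real-valued function of the natural number d > r', tends to 1 as d → ∞. -/
/-!
Scaled by `d⁻¹`, the matrix `[[a, b], [d - r, d - r]]` tends to the idempotent `E = [[0, 0], [1, 1]]`,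
so `d⁻ⁱ Mⁱ → Eⁱ`, whose second column sums to `1` for every `i`. Hence `N_i ~ dⁱ`, the sum
`∑_{i ≤ ℓ} N_i` is dominated by its top term `~ d^ℓ`, and `d^ℓ + d^(ℓ-1) ~ d^ℓ` as well.
-/

open Filter Finset Topology

lemma isIdempotentElem_bottomRowOnes : IsIdempotentElem (!![0, 0; 1, 1] : Matrix (Fin 2) (Fin 2) ℝ) := by
  ext i j
  fin_cases i <;> fin_cases j <;> simp [Matrix.mul_apply]

lemma bottomRowOnes_pow_col_one_sum (i : ℕ) :
    ((!![0, 0; 1, 1] : Matrix (Fin 2) (Fin 2) ℝ) ^ i) 0 1 + (!![0, 0; 1, 1] ^ i) 1 1 = 1 := by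
  rcases i with _ | i
  · simp
  · simp [isIdempotentElem_bottomRowOnes.pow_succ_eq]

lemma tendsto_inv_smul_mooreMatrix (a b r : ℝ) :
    Tendsto (fun d : ℕ => (d : ℝ)⁻¹ • !![a, b; d - r, d - r]) atTop (𝓝 !![0, 0; 1, 1]) := by
  have h0 (c : ℝ) : Tendsto (fun d : ℕ => (d : ℝ)⁻¹ * c) atTop (𝓝 0) := by
    simpa using tendsto_inv_atTop_zero.comp tendsto_natCast_atTop_atTop |>.mul_const c
  have h1 : Tendsto (fun d : ℕ => (d : ℝ)⁻¹ * (d - r)) atTop (𝓝 1) := by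
    have := (h0 r).const_sub 1
    rw [sub_zero] at this
    refine this.congr' ?_
    filter_upwards [eventually_ne_atTop 0] with d hd
    field_simp
  refine tendsto_pi_nhds.2 fun i => tendsto_pi_nhds.2 fun j => ?_
  fin_cases i <;> fin_cases j
  · simpa using h0 a
  · simpa using h0 b
  · simpa using h1
  · simpa using h1

lemma tendsto_mooreMatrix_pow_col_one_sum_div_pow (a b r : ℝ) (i : ℕ) :
    Tendsto (fun d : ℕ =>
      ((!![a, b; d - r, d - r] ^ i) 0 1 + (!![a, b; d - r, d - r] ^ i) 1 1) / (d : ℝ) ^ i)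
      atTop (𝓝 1) := by
  have hpow := (tendsto_inv_smul_mooreMatrix a b r).pow i
  have hentry (k : Fin 2) : Tendsto (fun d : ℕ => (((d : ℝ)⁻¹ • !![a, b; d - r, d - r]) ^ i) k 1)
      atTop (𝓝 ((!![0, 0; 1, 1] ^ i) k 1)) :=
    ((continuous_apply_apply k 1).tendsto _).comp hpow
  rw [← bottomRowOnes_pow_col_one_sum i]
  refine ((hentry 0).add (hentry 1)).congr fun d => ?_
  simp only [smul_pow, Matrix.smul_apply, smul_eq_mul, inv_pow]
  ring

lemma tendsto_sum_range_div_pow {f : ℕ → ℕ → ℝ} {c : ℕ → ℝ}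
    (hf : ∀ i, Tendsto (fun d => f i d / (d : ℝ) ^ i) atTop (𝓝 (c i))) (ℓ : ℕ) :
    Tendsto (fun d => (∑ i ∈ range (ℓ + 1), f i d) / (d : ℝ) ^ ℓ) atTop (𝓝 (c ℓ)) := by
  induction ℓ with
  | zero => simpa using hf 0
  | succ ℓ ih =>
    have hinv : Tendsto (fun d : ℕ => (d : ℝ)⁻¹) atTop (𝓝 0) :=
      tendsto_inv_atTop_zero.comp tendsto_natCast_atTop_atTop
    have := (ih.mul hinv).add (hf (ℓ + 1))
    rw [mul_zero, zero_add] at this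
    refine this.congr fun d => ?_
    rw [sum_range_succ _ (ℓ + 1), pow_succ]
    ring

theorem moore_ratio_tendsto_one_general (r' ℓ : ℕ) (hℓ : 1 ≤ ℓ) :
    Tendsto
      (fun d : ℕ =>
        (∑ i ∈ Finset.range (ℓ + 1),
            ((!![2 * (r' : ℝ) - 1, 2 * (r' : ℝ); (d : ℝ) - (r' : ℝ), (d : ℝ) - (r' : ℝ)] ^ i) 0 1 +
             (!![2 * (r' : ℝ) - 1, 2 * (r' : ℝ); (d : ℝ) - (r' : ℝ), (d : ℝ) - (r' : ℝ)] ^ i) 1 1)) /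
          ((d : ℝ) ^ ℓ + (d : ℝ) ^ (ℓ - 1)))
      atTop (nhds 1) := by
  obtain ⟨k, rfl⟩ := Nat.exists_eq_add_of_le' hℓ
  have hnum := tendsto_sum_range_div_pow
    (fun i => tendsto_mooreMatrix_pow_col_one_sum_div_pow (2 * r' - 1) (2 * r') r' i) (k + 1)
  have hden := tendsto_natCast_div_add_atTop (1 : ℝ)
  rw [← mul_one (1 : ℝ)]
  refine (hnum.mul hden).congr' ?_
  filter_upwards [eventually_ne_atTop 0] with d hd
  rw [Nat.add_sub_cancel, show (d : ℝ) ^ (k + 1) + d ^ k = d ^ (k + 1) * ((d + 1) / d) by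
    field_simp; ring]
  field_simp

/-- For fixed naturals `r' ≥ 1` and `ℓ ≥ 1`, the ratio of the mixed Moore bound
`M(2r', d - r', ℓ)` (computed via `∑_{i=0}^ℓ (1 1) · M^i · (0 1)ᵀ` with
`M = [[2r'-1, 2r'],[d-r', d-r']]`) to `d^ℓ + d^{ℓ-1}`, the order of the mixed graph
`S^ℓ_m(K*_{d+1})`, tends to `1` as `d → ∞`. -/
theorem moore_ratio_tendsto_one (r' ℓ : ℕ) (hr' : 1 ≤ r') (hℓ : 1 ≤ ℓ) :
    Tendsto
      (fun d : ℕ =>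
        (∑ i ∈ Finset.range (ℓ + 1),
            ((!![2 * (r' : ℝ) - 1, 2 * (r' : ℝ); (d : ℝ) - (r' : ℝ), (d : ℝ) - (r' : ℝ)] ^ i) 0 1 +
             (!![2 * (r' : ℝ) - 1, 2 * (r' : ℝ); (d : ℝ) - (r' : ℝ), (d : ℝ) - (r' : ℝ)] ^ i) 1 1)) /
          ((d : ℝ) ^ ℓ + (d : ℝ) ^ (ℓ - 1)))
      atTop (nhds 1) :=
  moore_ratio_tendsto_one_general r' ℓ hℓ
end

section
/- Let G be an r-regular simple graph on a finite vertex set V with |V| = n, and let l be a natural number. Then the number of pairs (u, w), where u ∈ V and w is a closed walk in G from u to u of length 2l whose support is a palindrome (i.e. w.support.reverse = w.support, equivalently w coincides with its conjugate walk), equals n · r^l. -/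
/-!
A closed walk of length `2l` has palindromic support exactly when its second half is the
reverse of its first half, so palindromic closed walks at `u` correspond to walks of length `l`
starting at `u`. In an `r`-regular graph these are counted by the row sums of `A ^ l`, where `A`
is the adjacency matrix, and `A ^ l` maps the all-ones vector to `r ^ l` times itself.
-/

namespace SimpleGraph

variable {V : Type*} {G : SimpleGraph V}

namespace Walk

lemma sigma_mk_eq_of_support_eq {u v w : V} {P : ∀ x, G.Walk u x → Prop}
    {p : G.Walk u v} {q : G.Walk u w} (hp : P v p) (hq : P w q) (h : p.support = q.support) :
    (⟨v, p, hp⟩ : Σ x, {r : G.Walk u x // P x r}) = ⟨w, q, hq⟩ := by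
  obtain rfl : v = w := by
    simpa only [getLast_support] using List.getLast_congr (by simp) (by simp) h
  obtain rfl := ext_support h
  rfl

lemma support_take_length_append {u v w : V} (p : G.Walk u v) (q : G.Walk v w) :
    ((p.append q).take p.length).support = p.support := by
  rw [support_take, support_append, List.take_left' (length_support p)]

lemma reverse_append_reverse_self {u v : V} (p : G.Walk u v) :
    (p.append p.reverse).reverse = p.append p.reverse := by
  rw [reverse_append, reverse_reverse]

lemma support_reverse_append_reverse_self {u v : V} (p : G.Walk u v) :
    (p.append p.reverse).support.reverse = (p.append p.reverse).support := by
  rw [← support_reverse, reverse_append_reverse_self]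

lemma drop_eq_reverse_take_of_support_reverse_eq {u : V} {l : ℕ} {w : G.Walk u u}
    (hlen : w.length = 2 * l) (hpal : w.support.reverse = w.support) :
    w.drop l = (w.take l).reverse := by
  apply ext_support
  rw [drop_support_eq_support_drop_min, support_reverse, support_take, List.reverse_take, hpal,
    length_support]
  congr 1
  omega

lemma eq_append_reverse_take_of_support_reverse_eq {u : V} {l : ℕ} {w : G.Walk u u}
    (hlen : w.length = 2 * l) (hpal : w.support.reverse = w.support) :
    (w.take l).append (w.take l).reverse = w := by
  rw [← drop_eq_reverse_take_of_support_reverse_eq hlen hpal, append_take_drop_eq]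

end Walk

def closedPalindromeWalkEquiv (u : V) (l : ℕ) :
    {w : G.Walk u u // w.length = 2 * l ∧ w.support.reverse = w.support} ≃
      Σ v, {p : G.Walk u v // p.length = l} where
  toFun w := ⟨_, w.1.take l, by rw [Walk.take_length, w.2.1]; omega⟩
  invFun p := ⟨p.2.1.append p.2.1.reverse, by rw [Walk.length_append, Walk.length_reverse,
    p.2.2, two_mul], p.2.1.support_reverse_append_reverse_self⟩
  left_inv w := Subtype.ext (Walk.eq_append_reverse_take_of_support_reverse_eq w.2.1 w.2.2)
  right_inv := by
    rintro ⟨v, p, rfl⟩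
    exact Walk.sigma_mk_eq_of_support_eq (P := fun _ q => q.length = p.length) _ _
      (Walk.support_take_length_append p p.reverse)

section Regular

open Matrix

variable [Fintype V] [DecidableEq V] [DecidableRel G.Adj]

theorem adjMatrix_pow_mulVec_const_of_regular {α : Type*} [Semiring α] {d : ℕ}
    (hd : G.IsRegularOfDegree d) (n : ℕ) (a : α) :
    G.adjMatrix α ^ n *ᵥ Function.const V a = Function.const V ((d : α) ^ n * a) := by
  induction n with
  | zero => simp
  | succ n ih =>
    funext v
    rw [pow_succ', ← Matrix.mulVec_mulVec, ih, adjMatrix_mulVec_const_apply_of_regular hd,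
      Function.const_apply, pow_succ', mul_assoc]

theorem card_sigma_walk_length_of_regular {r : ℕ} (hreg : G.IsRegularOfDegree r)
    (u : V) (l : ℕ) : Fintype.card (Σ v, {p : G.Walk u v // p.length = l}) = r ^ l := by
  have hrow : ∑ v, (G.adjMatrix ℕ ^ l) u v = r ^ l := by
    simpa [Matrix.mulVec, dotProduct] using
      congrFun (adjMatrix_pow_mulVec_const_of_regular hreg l (1 : ℕ)) u
  rw [Fintype.card_sigma, ← hrow]
  exact Finset.sum_congr rfl fun v _ => (adjMatrix_pow_apply_eq_card_walk l u v).symm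

end Regular

end SimpleGraph

/-- In an `r`-regular simple graph on `n` vertices, the number of pairs `(u, w)` where
`w` is a closed walk at `u` of length `2l` with palindromic support (i.e. `w` coincides
with its conjugate walk) equals `n · r^l`. -/
theorem card_palindromic_closed_walks {V : Type*} [Fintype V] [DecidableEq V]
    (G : SimpleGraph V) [DecidableRel G.Adj] (r : ℕ) (hreg : G.IsRegularOfDegree r)
    (l : ℕ) :
    Nat.card (Σ u : V, {w : G.Walk u u // w.length = 2 * l ∧ w.support.reverse = w.support}) =
      Fintype.card V * r ^ l := by
  rw [Nat.card_congr (Equiv.sigmaCongrRight fun u => SimpleGraph.closedPalindromeWalkEquiv u l),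
    Nat.card_eq_fintype_card, Fintype.card_sigma]
  simp [SimpleGraph.card_sigma_walk_length_of_regular hreg]
end

section
/- Let (G, D) be a mixed graph on a finite vertex set V with |V| = n such that G is r-regular and every vertex has exactly r + z out-neighbors in D, and let ℓ be an odd natural number. On the set of D-walks of length ℓ, consider the equivalence relation where f ∼ g iff f = g, or every step of f is an edge of G and g is the reverse of f (g(i) = f(ℓ − i) for all i). Then twice the number of equivalence classes equals n · (2(r+z)^ℓ − r^ℓ). (The number of equivalence classes is the order N_ℓ(G) of the ℓ-sequence mixed graph S^ℓ(G), so N_ℓ(G) = n[(r+z)^ℓ + r^ℓ/2] for odd ℓ.) -/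
section helpers

lemma nat_card_fibers {α β : Type*} [Finite α] [Finite β] (F : β → α) (k : ℕ)
    (h : ∀ a : α, Nat.card {b // F b = a} = k) :
    Nat.card β = Nat.card α * k := by
  classical
  cases nonempty_fintype α
  cases nonempty_fintype β
  have e2 : ∀ a : α, {b // F b = a} ≃ Fin k := fun a => by
    have : Fintype {b // F b = a} := Fintype.ofFinite _
    exact Fintype.equivFinOfCardEq (by rw [← Nat.card_eq_fintype_card, h])
  have e : β ≃ α × Fin k := (Equiv.sigmaFiberEquiv F).symm.trans (Equiv.sigmaEquivProdOfEquiv e2)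
  rw [Nat.card_congr e, Nat.card_prod, Nat.card_eq_fintype_card (α := Fin k), Fintype.card_fin]

lemma card_walks {V : Type*} [Fintype V] [DecidableEq V] (D : V → V → Prop) (k : ℕ)
    (h : ∀ v, {w : V | D v w}.ncard = k) :
    ∀ ℓ : ℕ, Nat.card {f : Fin (ℓ + 1) → V // ∀ i : Fin ℓ, D (f i.castSucc) (f i.succ)} =
      Fintype.card V * k ^ ℓ := by
  intro ℓ
  induction ℓ with
  | zero =>
    have e : {f : Fin 1 → V // ∀ i : Fin 0, D (f i.castSucc) (f i.succ)} ≃ V :=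
      { toFun := fun f => f.1 0
        invFun := fun v => ⟨fun _ => v, fun i => i.elim0⟩
        left_inv := fun f => Subtype.ext (funext fun i => by
          have hi : i = 0 := Subsingleton.elim _ _
          rw [hi])
        right_inv := fun v => rfl }
    rw [Nat.card_congr e, Nat.card_eq_fintype_card, pow_zero, mul_one]
  | succ ℓ ih =>
    classical
    have hcardD : ∀ v : V, Nat.card {w : V // D v w} = k := fun v => by
      have : Nat.card ↥{w : V | D v w} = {w : V | D v w}.ncard := Nat.card_coe_set_eq _
      exact this.trans (h v)
    let F : {f : Fin (ℓ + 1 + 1) → V // ∀ i : Fin (ℓ + 1), D (f i.castSucc) (f i.succ)} →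
        {f : Fin (ℓ + 1) → V // ∀ i : Fin ℓ, D (f i.castSucc) (f i.succ)} :=
      fun f => ⟨fun i => f.1 i.castSucc, fun i => by
        have := f.2 i.castSucc
        rwa [Fin.succ_castSucc] at this⟩
    have hfib : ∀ g : {f : Fin (ℓ + 1) → V // ∀ i : Fin ℓ, D (f i.castSucc) (f i.succ)},
        Nat.card {f // F f = g} = k := by
      intro g
      have e : {f // F f = g} ≃ {w : V // D (g.1 (Fin.last ℓ)) w} :=
        { toFun := fun f => ⟨f.1.1 (Fin.last (ℓ + 1)), by
            have h1 := f.1.2 (Fin.last ℓ)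
            have h2 : (F f.1).1 (Fin.last ℓ) = g.1 (Fin.last ℓ) := by rw [f.2]
            rw [Fin.succ_last] at h1
            rwa [← h2]⟩
          invFun := fun w => by
            refine ⟨⟨Fin.snoc g.1 w.1, ?_⟩, ?_⟩
            · intro i
              refine Fin.lastCases ?_ (fun j => ?_) i
              · rw [Fin.succ_last, Fin.snoc_castSucc, Fin.snoc_last]
                exact w.2
              · rw [Fin.succ_castSucc, Fin.snoc_castSucc, Fin.snoc_castSucc]
                exact g.2 j
            · apply Subtype.ext
              funext i
              have hsc : ∀ (pf : Fin (ℓ + 1) → V) (x : V) (i : Fin (ℓ + 1)),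
                  Fin.snoc (α := fun _ => V) pf x i.castSucc = pf i := fun pf x i => Fin.snoc_castSucc ..
              exact hsc g.1 w.1 i
          left_inv := fun f => by
            apply Subtype.ext
            apply Subtype.ext
            show Fin.snoc g.1 (f.1.1 (Fin.last (ℓ + 1))) = f.1.1
            funext i
            refine Fin.lastCases ?_ (fun j => ?_) i
            · exact Fin.snoc_last _ _
            · rw [Fin.snoc_castSucc]
              exact (congrFun (congrArg Subtype.val f.2) j).symm
          right_inv := fun w => by
            apply Subtype.ext
            show Fin.snoc (α := fun _ => V) g.1 w.1 (Fin.last (ℓ + 1)) = w.1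
            exact Fin.snoc_last .. }
      rw [Nat.card_congr e]
      exact hcardD _
    rw [nat_card_fibers F k hfib, ih, pow_succ, mul_assoc]

lemma quot_count {α : Type*} [Finite α] (p : α → Prop) (τ : α → α)
    (hτp : ∀ a, p a → p (τ a))
    (hττ : ∀ a, p a → τ (τ a) = a)
    (hfix : ∀ a, p a → τ a ≠ a) :
    2 * Nat.card (Quot (fun f g => f = g ∨ (p f ∧ g = τ f))) + Nat.card {a // p a} =
      2 * Nat.card α := by
  classical
  set R : α → α → Prop := fun f g => f = g ∨ (p f ∧ g = τ f) with hR
  let τ' : {a // p a} → {a // p a} := fun e => ⟨τ e.1, hτp e.1 e.2⟩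
  let R' : {a // p a} → {a // p a} → Prop := fun a b => a = b ∨ b.1 = τ a.1
  have hEqv : ∀ x y : {a // p a}, Relation.EqvGen R' x y → (y = x ∨ y = τ' x) := by
    intro x y h
    induction h with
    | rel a b hab =>
      rcases hab with h | h
      · exact Or.inl h.symm
      · exact Or.inr (Subtype.ext h)
    | refl a => exact Or.inl rfl
    | symm a b _ ih =>
      rcases ih with h | h
      · exact Or.inl h.symm
      · refine Or.inr ?_
        rw [h]
        exact (Subtype.ext (hττ a.1 a.2)).symm
    | trans a b c _ _ ih1 ih2 =>
      rcases ih1 with h1 | h1 <;> rcases ih2 with h2 | h2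
      · exact Or.inl (h2.trans h1)
      · exact Or.inr (h2.trans (by rw [h1]))
      · exact Or.inr (h2.trans h1)
      · refine Or.inl ?_
        rw [h2, h1]
        exact Subtype.ext (hττ a.1 a.2)
  let toF : α → {a // ¬ p a} ⊕ Quot R' := fun a =>
    if h : p a then Sum.inr (Quot.mk R' ⟨a, h⟩) else Sum.inl ⟨a, h⟩
  have wf : ∀ a b, R a b → toF a = toF b := by
    intro a b hab
    rcases hab with rfl | ⟨hp, rfl⟩
    · rfl
    · simp only [toF, dif_pos hp, dif_pos (hτp a hp)]
      exact congrArg Sum.inr (Quot.sound (Or.inr rfl))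
  have wf2 : ∀ a b : {a // p a}, R' a b → Quot.mk R a.1 = Quot.mk R b.1 := by
    intro a b hab
    rcases hab with rfl | h
    · rfl
    · exact Quot.sound (Or.inr ⟨a.2, h⟩)
  let eqA : Quot R ≃ {a // ¬ p a} ⊕ Quot R' :=
    { toFun := Quot.lift toF wf
      invFun := Sum.elim (fun a => Quot.mk R a.1) (Quot.lift (fun e => Quot.mk R e.1) wf2)
      left_inv := by
        refine Quot.ind fun a => ?_
        by_cases h : p a <;> simp [toF, h]
      right_inv := by
        rintro (a | q)
        · simp [toF, a.2]
        · obtain ⟨e, rfl⟩ := Quot.exists_rep q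
          simp [toF, e.2] }
  haveI : Finite (Quot R') := Finite.of_surjective (Quot.mk R') (Quot.mk_surjective)
  have hfib : ∀ q : Quot R', Nat.card {e : {a // p a} // Quot.mk R' e = q} = 2 := by
    intro q
    obtain ⟨a, rfl⟩ := Quot.exists_rep q
    have hmem : ∀ e : {a // p a}, Quot.mk R' e = Quot.mk R' a ↔ e ∈ ({a, τ' a} : Set _) := by
      intro e
      constructor
      · intro h
        rcases hEqv a e (Quot.eq.mp h.symm) with rfl | rfl
        · exact Set.mem_insert _ _
        · exact Set.mem_insert_of_mem _ rfl
      · rintro (rfl | h)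
        · rfl
        · rw [Set.mem_singleton_iff] at h
          subst h
          exact (Quot.sound (show R' a (τ' a) from Or.inr rfl)).symm
    have hne : a ≠ τ' a := fun h => hfix a.1 a.2 ((congrArg Subtype.val h).symm)
    calc Nat.card {e : {a // p a} // Quot.mk R' e = Quot.mk R' a}
        = Nat.card ({a, τ' a} : Set _) := Nat.card_congr (Equiv.subtypeEquivRight hmem)
      _ = 2 := by rw [Nat.card_coe_set_eq, Set.ncard_pair hne]
  have hE2 : Nat.card {a // p a} = Nat.card (Quot R') * 2 := nat_card_fibers (Quot.mk R') 2 hfib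
  have hsum : Nat.card α = Nat.card {a // p a} + Nat.card {a // ¬ p a} := by
    rw [← Nat.card_sum]
    exact Nat.card_congr (Equiv.sumCompl p).symm
  have hQ : Nat.card (Quot R) = Nat.card {a // ¬ p a} + Nat.card (Quot R') := by
    rw [Nat.card_congr eqA, Nat.card_sum]
  omega

end helpers

/-- Let `(G, D)` be a mixed graph on `n` vertices (`D` a digraph containing the simple
graph `G`), with `G` being `r`-regular and every vertex having exactly `r + z`
out-neighbors in `D`, and let `ℓ` be odd. On the set of `D`-walks of length `ℓ`,
identify each all-edge walk with its reverse. Then twice the number of equivalence classes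
(i.e. twice the order `N_ℓ(G)` of the `ℓ`-sequence mixed graph `S^ℓ(G)`) equals
`n · (2(r+z)^ℓ - r^ℓ)`, that is, `N_ℓ(G) = n[(r+z)^ℓ + r^ℓ/2]`. -/
theorem two_mul_order_sequence_mixed_graph_odd {V : Type*} [Fintype V] [DecidableEq V]
    (G : SimpleGraph V) [DecidableRel G.Adj] (D : V → V → Prop)
    (hsub : ∀ u v : V, G.Adj u v → D u v)
    (r z : ℕ) (hreg : G.IsRegularOfDegree r)
    (hout : ∀ v : V, {w : V | D v w}.ncard = r + z) (ℓ : ℕ) (hℓ : Odd ℓ) :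
    2 * Nat.card (Quot
        (fun f g : {f : Fin (ℓ + 1) → V // ∀ i : Fin ℓ, D (f i.castSucc) (f i.succ)} =>
          f = g ∨ ((∀ i : Fin ℓ, G.Adj (f.1 i.castSucc) (f.1 i.succ)) ∧
            ∀ i : Fin (ℓ + 1), g.1 i = f.1 i.rev))) =
      Fintype.card V * (2 * (r + z) ^ ℓ - r ^ ℓ) := by
  classical
  obtain ⟨m, hm⟩ := hℓ
  set W := {f : Fin (ℓ + 1) → V // ∀ i : Fin ℓ, D (f i.castSucc) (f i.succ)} with hWdef
  let p : W → Prop := fun f => ∀ i : Fin ℓ, G.Adj (f.1 i.castSucc) (f.1 i.succ)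
  have hrevD : ∀ f : W, p f → ∀ i : Fin ℓ,
      D ((fun j : Fin (ℓ + 1) => f.1 j.rev) i.castSucc) ((fun j : Fin (ℓ + 1) => f.1 j.rev) i.succ) := by
    intro f hf i
    simp only
    rw [Fin.rev_castSucc, Fin.rev_succ]
    exact hsub _ _ (hf i.rev).symm
  let τ : W → W := fun f => if h : p f then ⟨fun j => f.1 j.rev, hrevD f h⟩ else f
  have hτ_eq : ∀ f (h : p f), τ f = ⟨fun j => f.1 j.rev, hrevD f h⟩ := fun f h => dif_pos h
  have hτp : ∀ f, p f → p (τ f) := by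
    intro f hf
    rw [hτ_eq f hf]
    intro i
    simp only
    rw [Fin.rev_castSucc, Fin.rev_succ]
    exact (hf i.rev).symm
  have hττ : ∀ f, p f → τ (τ f) = f := by
    intro f hf
    have h2 := hτp f hf
    rw [hτ_eq f hf] at h2 ⊢
    rw [hτ_eq _ h2]
    exact Subtype.ext (funext fun i => by simp [Fin.rev_rev])
  have hfix : ∀ f, p f → τ f ≠ f := by
    intro f hf hEq
    rw [hτ_eq f hf] at hEq
    have hpt : ∀ i : Fin (ℓ + 1), f.1 i.rev = f.1 i :=
      fun i => congrFun (congrArg Subtype.val hEq) i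
    have hjlt : m < ℓ := by omega
    set j : Fin ℓ := ⟨m, hjlt⟩ with hj
    have h1 := hf j
    have h2 : (j.succ : Fin (ℓ + 1)).rev = j.castSucc := by
      apply Fin.ext
      simp only [Fin.val_rev, Fin.val_succ, Fin.coe_castSucc, hj]
      omega
    have h3 := hpt j.succ
    rw [h2] at h3
    exact h1.ne h3
  have hrel : (fun f g : W => f = g ∨ ((∀ i : Fin ℓ, G.Adj (f.1 i.castSucc) (f.1 i.succ)) ∧
        ∀ i : Fin (ℓ + 1), g.1 i = f.1 i.rev)) =
      fun f g : W => f = g ∨ (p f ∧ g = τ f) := by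
    funext f g
    apply propext
    apply or_congr_right
    apply and_congr_right
    intro hf
    rw [hτ_eq f hf]
    constructor
    · intro h
      exact Subtype.ext (funext h)
    · intro h i
      rw [h]
  rw [hrel]
  have hq := quot_count p τ hτp hττ hfix
  have hW : Nat.card W = Fintype.card V * (r + z) ^ ℓ := card_walks D (r + z) hout ℓ
  have hGE : Nat.card {f : W // p f} = Fintype.card V * r ^ ℓ := by
    have e : {f : W // p f} ≃
        {f : Fin (ℓ + 1) → V // ∀ i : Fin ℓ, G.Adj (f i.castSucc) (f i.succ)} :=
      { toFun := fun e => ⟨e.1.1, e.2⟩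
        invFun := fun g => ⟨⟨g.1, fun i => hsub _ _ (g.2 i)⟩, g.2⟩
        left_inv := fun e => rfl
        right_inv := fun g => rfl }
    rw [Nat.card_congr e]
    refine card_walks G.Adj r ?_ ℓ
    intro v
    have hset : {w : V | G.Adj v w} = ↑(G.neighborFinset v) := by
      ext w
      simp [SimpleGraph.mem_neighborFinset]
    rw [hset, Set.ncard_coe_finset]
    exact hreg v
  rw [hW, hGE] at hq
  have hmul : Fintype.card V * (2 * (r + z) ^ ℓ - r ^ ℓ)
      = 2 * (Fintype.card V * (r + z) ^ ℓ) - Fintype.card V * r ^ ℓ := by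
    rw [Nat.mul_sub, mul_left_comm]
  rw [hmul]
  generalize hA : Fintype.card V * (r + z) ^ ℓ = A at hq ⊢
  generalize hB : Fintype.card V * r ^ ℓ = B at hq ⊢
  omega
end

section
/- Let (G, D) be a mixed graph on a finite vertex set V with |V| = n such that G is r-regular and every vertex has exactly r + z out-neighbors in D, and let ℓ be an even natural number. On the set of D-walks of length ℓ, consider the equivalence relation where f ∼ g iff f = g, or every step of f is an edge of G and g is the reverse of f (g(i) = f(ℓ − i) for all i). Then twice the number of equivalence classes equals n · (2(r+z)^ℓ − r^ℓ + r^{ℓ/2}). -/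
abbrev MWk {V : Type*} (A : V → V → Prop) (ℓ : ℕ) :=
  {f : Fin (ℓ + 1) → V // ∀ i : Fin ℓ, A (f i.castSucc) (f i.succ)}

section SigmaWalk


variable {V : Type*} (G : SimpleGraph V) [DecidableRel G.Adj] (D : V → V → Prop)
  (ℓ : ℕ)

def sigmaWalk (hsub : ∀ u v : V, G.Adj u v → D u v) (f : MWk D ℓ) : MWk D ℓ :=
  if h : ∀ i : Fin ℓ, G.Adj (f.1 i.castSucc) (f.1 i.succ) then
    ⟨fun i => f.1 i.rev, fun i => by
      show D (f.1 i.castSucc.rev) (f.1 i.succ.rev)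
      rw [Fin.rev_castSucc, Fin.rev_succ]
      exact hsub _ _ (h i.rev).symm⟩
  else f

variable (hsub : ∀ u v : V, G.Adj u v → D u v)

lemma sigmaWalk_val (f : MWk D ℓ) : (sigmaWalk G D ℓ hsub f).1 =
    if ∀ i : Fin ℓ, G.Adj (f.1 i.castSucc) (f.1 i.succ) then
      (fun i => f.1 i.rev) else f.1 := by
  unfold sigmaWalk
  split <;> rfl

lemma sigmaWalk_involutive : Function.Involutive (sigmaWalk G D ℓ hsub) := by
  intro f
  apply Subtype.ext
  by_cases h : ∀ i : Fin ℓ, G.Adj (f.1 i.castSucc) (f.1 i.succ)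
  · have hv : (sigmaWalk G D ℓ hsub f).1 = fun i => f.1 i.rev := by
      rw [sigmaWalk_val, if_pos h]
    have h2 : ∀ i : Fin ℓ, G.Adj ((sigmaWalk G D ℓ hsub f).1 i.castSucc)
        ((sigmaWalk G D ℓ hsub f).1 i.succ) := by
      intro i
      rw [hv]
      simp only
      rw [Fin.rev_castSucc, Fin.rev_succ]
      exact (h i.rev).symm
    rw [sigmaWalk_val, if_pos h2, hv]
    funext i
    simp [Fin.rev_rev]
  · have hv : (sigmaWalk G D ℓ hsub f).1 = f.1 := by rw [sigmaWalk_val, if_neg h]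
    have h2 : ¬ ∀ i : Fin ℓ, G.Adj ((sigmaWalk G D ℓ hsub f).1 i.castSucc)
        ((sigmaWalk G D ℓ hsub f).1 i.succ) := by
      intro hc
      exact h fun i => by have := hc i; rwa [hv] at this
    rw [sigmaWalk_val, if_neg h2, hv]

lemma rel_eq :
    (fun f g : MWk D ℓ => f = g ∨ ((∀ i : Fin ℓ, G.Adj (f.1 i.castSucc) (f.1 i.succ)) ∧
        ∀ i : Fin (ℓ + 1), g.1 i = f.1 i.rev))
      = fun f g => f = g ∨ g = sigmaWalk G D ℓ hsub f := by
  funext f g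
  apply propext
  constructor
  · rintro (rfl | ⟨hA, hv⟩)
    · exact Or.inl rfl
    · refine Or.inr (Subtype.ext ?_)
      rw [sigmaWalk_val, if_pos hA]
      exact funext hv
  · rintro (rfl | rfl)
    · exact Or.inl rfl
    · by_cases h : ∀ i : Fin ℓ, G.Adj (f.1 i.castSucc) (f.1 i.succ)
      · refine Or.inr ⟨h, fun i => ?_⟩
        rw [sigmaWalk_val, if_pos h]
      · exact Or.inl (Subtype.ext (by rw [sigmaWalk_val, if_neg h])).symm

lemma sigmaWalk_fix_iff (f : MWk D ℓ) :
    sigmaWalk G D ℓ hsub f = f ↔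
      ((¬ ∀ i : Fin ℓ, G.Adj (f.1 i.castSucc) (f.1 i.succ)) ∨
        ((∀ i : Fin ℓ, G.Adj (f.1 i.castSucc) (f.1 i.succ)) ∧
          ∀ i : Fin (ℓ + 1), f.1 i = f.1 i.rev)) := by
  by_cases h : ∀ i : Fin ℓ, G.Adj (f.1 i.castSucc) (f.1 i.succ)
  · constructor
    · intro he
      refine Or.inr ⟨h, fun i => ?_⟩
      have := congrFun (congrArg Subtype.val he) i
      rw [sigmaWalk_val, if_pos h] at this
      exact this.symm
    · rintro (hc | ⟨-, hp⟩)
      · exact absurd h hc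
      · refine Subtype.ext ?_
        rw [sigmaWalk_val, if_pos h]
        exact funext fun i => (hp i).symm
  · refine iff_of_true ?_ (Or.inl h)
    exact Subtype.ext (by rw [sigmaWalk_val, if_neg h])

def subwalk_equiv (A B : V → V → Prop) (hAB : ∀ u v, A u v → B u v)
    (P : (Fin (ℓ + 1) → V) → Prop) :
    {f : MWk B ℓ // (∀ i : Fin ℓ, A (f.1 i.castSucc) (f.1 i.succ)) ∧ P f.1}
      ≃ {g : MWk A ℓ // P g.1} where
  toFun f := ⟨⟨f.1.1, f.2.1⟩, f.2.2⟩
  invFun g := ⟨⟨g.1.1, fun i => hAB _ _ (g.1.2 i)⟩, g.1.2, g.2⟩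
  left_inv f := rfl
  right_inv g := rfl

def subwalk_equiv' (A B : V → V → Prop) (hAB : ∀ u v, A u v → B u v) :
    {f : MWk B ℓ // ∀ i : Fin ℓ, A (f.1 i.castSucc) (f.1 i.succ)} ≃ MWk A ℓ where
  toFun f := ⟨f.1.1, f.2⟩
  invFun g := ⟨⟨g.1, fun i => hAB _ _ (g.2 i)⟩, g.2⟩
  left_inv f := rfl
  right_inv g := rfl

end SigmaWalk


lemma nat_card_sigma' {ι : Type*} [Fintype ι] (β : ι → Type*) [∀ i, Finite (β i)] :
    Nat.card (Sigma β) = ∑ i, Nat.card (β i) := by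
  classical
  have := fun i => Fintype.ofFinite (β i)
  simp [Nat.card_eq_fintype_card]

lemma mwk_card {V : Type*} [Fintype V] (A : V → V → Prop) (d : ℕ)
    (h : ∀ v, Nat.card {w // A v w} = d) :
    ∀ ℓ, Nat.card (MWk A ℓ) = Fintype.card V * d ^ ℓ := by
  intro ℓ
  induction ℓ with
  | zero =>
    have e : MWk A 0 ≃ V :=
      { toFun := fun f => f.1 0
        invFun := fun v => ⟨fun _ => v, fun i => i.elim0⟩
        left_inv := fun f => Subtype.ext (funext fun i => congrArg f.1 (by fin_cases i <;> rfl))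
        right_inv := fun v => rfl }
    simp [Nat.card_congr e, Nat.card_eq_fintype_card]
  | succ ℓ ih =>
    classical
    have e : MWk A (ℓ+1) ≃ Σ f : MWk A ℓ, {w // A (f.1 (Fin.last ℓ)) w} :=
      { toFun := fun f =>
          ⟨⟨Fin.init f.1, fun i => by
              have := f.2 i.castSucc
              rwa [Fin.succ_castSucc] at this⟩,
            ⟨f.1 (Fin.last (ℓ+1)), by
              have := f.2 (Fin.last ℓ)
              rwa [Fin.succ_last] at this⟩⟩
        invFun := fun x =>
          ⟨Fin.snoc x.1.1 x.2.1, fun i => by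
            induction i using Fin.lastCases with
            | last => simpa [Fin.succ_last] using x.2.2
            | cast j =>
              simp only [Fin.succ_castSucc, Fin.snoc_castSucc]
              exact x.1.2 j⟩
        left_inv := fun f => Subtype.ext (Fin.snoc_init_self f.1)
        right_inv := fun x => by
          rcases x with ⟨⟨g, hg⟩, ⟨w, hw⟩⟩
          have h1 : Fin.init (α := fun _ => V) (Fin.snoc g w) = g := by simp
          refine Sigma.ext (Subtype.ext h1) ?_
          rw [Subtype.heq_iff_coe_eq]
          · simp
          · intro x; simp }
    have := Fintype.ofFinite (MWk A ℓ)
    rw [Nat.card_congr e, nat_card_sigma']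
    simp only [h]
    rw [Finset.sum_const, Finset.card_univ, smul_eq_mul, ← Nat.card_eq_fintype_card, ih,
      pow_succ, mul_assoc]

lemma two_mul_card_quot {α : Type*} [Finite α] (σ : α → α) (hσ : Function.Involutive σ) :
    2 * Nat.card (Quot fun a b => a = b ∨ b = σ a)
      = Nat.card α + Nat.card {a // σ a = a} := by
  classical
  have := Fintype.ofFinite α
  set r : α → α → Prop := fun a b => a = b ∨ b = σ a with hr
  have hequiv : Equivalence r := by
    constructor
    · intro a; exact Or.inl rfl
    · rintro a b (rfl | rfl)
      exacts [Or.inl rfl, Or.inr (hσ a).symm]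
    · rintro a b c (rfl | rfl) (rfl | rfl)
      exacts [Or.inl rfl, Or.inr rfl, Or.inr rfl, Or.inl (hσ a).symm]
  have key : ∀ a b, Quot.mk r a = Quot.mk r b ↔ r a b := fun a b =>
    Quot.eq.trans hequiv.eqvGen_iff
  have hfin : Finite (Quot r) := Finite.of_surjective _ Quot.mk_surjective
  have := Fintype.ofFinite (Quot r)
  rw [Nat.card_eq_fintype_card, Nat.card_eq_fintype_card, Nat.card_eq_fintype_card]
  have hfib : ∀ a : α,
      (Finset.univ.filter fun x => Quot.mk r x = Quot.mk r a) = {a, σ a} := by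
    intro a
    ext x
    simp only [Finset.mem_filter, Finset.mem_univ, true_and, key, hr,
      Finset.mem_insert, Finset.mem_singleton]
    constructor
    · rintro (rfl | rfl)
      · exact Or.inl rfl
      · exact Or.inr (hσ x).symm
    · rintro (rfl | rfl)
      · exact Or.inl rfl
      · exact Or.inr (hσ a).symm
  have h3 : ∀ q : Quot r,
      (Finset.univ.filter fun a => Quot.mk r a = q).card
        + (Finset.univ.filter fun a => σ a = a ∧ Quot.mk r a = q).card = 2 := by
    refine Quot.ind ?_
    intro a
    by_cases h : σ a = a
    · have e1 : (Finset.univ.filter fun x => Quot.mk r x = Quot.mk r a) = {a} := by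
        rw [hfib a, h]; simp
      have e2 : (Finset.univ.filter fun x => σ x = x ∧ Quot.mk r x = Quot.mk r a) = {a} := by
        ext x
        simp only [Finset.mem_filter, Finset.mem_univ, true_and, key, hr,
          Finset.mem_singleton]
        constructor
        · rintro ⟨hx, rfl | rfl⟩
          · rfl
          · exact hx.symm
        · rintro rfl; exact ⟨h, Or.inl rfl⟩
      rw [e1, e2]; simp
    · have e1 : (Finset.univ.filter fun x => Quot.mk r x = Quot.mk r a).card = 2 := by
        rw [hfib a]
        exact Finset.card_pair fun e => h e.symm
      have e2 : (Finset.univ.filter fun x => σ x = x ∧ Quot.mk r x = Quot.mk r a) = ∅ := by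
        ext x
        simp only [Finset.mem_filter, Finset.mem_univ, true_and, key, hr,
          Finset.notMem_empty, iff_false, not_and]
        rintro hx (rfl | rfl)
        · exact h hx
        · exact h ((hσ x).trans hx.symm)
      rw [e1, e2]; simp
  have h1 : Fintype.card α
      = ∑ q : Quot r, (Finset.univ.filter fun a => Quot.mk r a = q).card := by
    rw [← Finset.card_univ]
    exact Finset.card_eq_sum_card_fiberwise fun x _ => Finset.mem_univ _
  have h2 : Fintype.card {a // σ a = a}
      = ∑ q : Quot r, (Finset.univ.filter fun a => σ a = a ∧ Quot.mk r a = q).card := by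
    rw [Fintype.card_subtype]
    rw [Finset.card_eq_sum_card_fiberwise (f := Quot.mk r) (t := Finset.univ)
      fun x _ => Finset.mem_univ _]
    refine Finset.sum_congr rfl fun q _ => ?_
    rw [Finset.filter_filter]
  rw [h1, h2, ← Finset.sum_add_distrib]
  rw [Finset.sum_congr rfl fun q _ => h3 q]
  simp [mul_comm]


def palin_equiv {V : Type*} (A : V → V → Prop) (hsymm : ∀ u v, A u v → A v u) (m : ℕ) :
    {f : MWk A (m + m) // ∀ i : Fin (m + m + 1), f.1 i = f.1 i.rev} ≃ MWk A m where
  toFun f := ⟨fun i => f.1.1 (Fin.castLE (by omega) i), by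
    intro i
    have := f.1.2 (Fin.castLE (by omega : m ≤ m + m) i)
    convert this using 2 <;>
      (refine congrArg f.1.1 (Fin.ext ?_);
       simp only [Fin.coe_castSucc, Fin.val_succ, Fin.coe_castLE] <;>
       omega)⟩
  invFun g := ⟨⟨fun i => g.1 ⟨min i.1 (m + m - i.1), by omega⟩, by
      intro i
      have hi : i.1 < m + m := i.isLt
      rcases Nat.lt_or_ge i.1 m with h | h
      · have := g.2 ⟨i.1, h⟩
        convert this using 2 <;>
          (refine congrArg g.1 (Fin.ext ?_);
           simp only [Fin.coe_castSucc, Fin.val_succ];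
           omega)
      · have h2 : m + m - i.1 - 1 < m := by omega
        have := hsymm _ _ (g.2 ⟨m + m - i.1 - 1, h2⟩)
        convert this using 2 <;>
          (refine congrArg g.1 (Fin.ext ?_);
           simp only [Fin.coe_castSucc, Fin.val_succ];
           omega)⟩, by
    intro i
    have hi : i.1 < m + m + 1 := i.isLt
    exact congrArg g.1 (Fin.ext (by
      try simp only [Fin.val_rev]
      omega))⟩
  left_inv f := by
    refine Subtype.ext (Subtype.ext (funext fun i => ?_))
    have hi : i.1 < m + m + 1 := i.isLt
    rcases le_or_gt (i.1 + i.1) (m + m) with h | h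
    · exact congrArg f.1.1 (Fin.ext (by
        try simp only [Fin.coe_castLE, Fin.val_rev]
        omega))
    · calc f.1.1 (Fin.castLE (by omega) (⟨min i.1 (m + m - i.1), by omega⟩ : Fin (m + 1)))
          = f.1.1 i.rev := congrArg f.1.1 (Fin.ext (by
              try simp only [Fin.coe_castLE, Fin.val_rev]
              omega))
        _ = f.1.1 i := (f.2 i).symm
  right_inv g := by
    refine Subtype.ext (funext fun i => ?_)
    have hi : i.1 < m + 1 := i.isLt
    exact congrArg g.1 (Fin.ext (by
      try simp only [Fin.coe_castLE]
      omega))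

/-- Let `(G, D)` be a mixed graph on `n` vertices (`D` a digraph containing the simple
graph `G`), with `G` being `r`-regular and every vertex having exactly `r + z`
out-neighbors in `D`, and let `ℓ` be even. On the set of `D`-walks of length `ℓ`,
identify each all-edge walk with its reverse. Then twice the number of equivalence classes
(i.e. twice the order `N_ℓ(G)` of the `ℓ`-sequence mixed graph `S^ℓ(G)`) equals
`n · (2(r+z)^ℓ - r^ℓ + r^{ℓ/2})`, that is, `N_ℓ(G) = n[(r+z)^ℓ + (r^ℓ + r^{ℓ/2})/2]`. -/
theorem two_mul_order_sequence_mixed_graph_even {V : Type*} [Fintype V] [DecidableEq V]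
    (G : SimpleGraph V) [DecidableRel G.Adj] (D : V → V → Prop)
    (hsub : ∀ u v : V, G.Adj u v → D u v)
    (r z : ℕ) (hreg : G.IsRegularOfDegree r)
    (hout : ∀ v : V, {w : V | D v w}.ncard = r + z) (ℓ : ℕ) (hℓ : Even ℓ) :
    2 * Nat.card (Quot
        (fun f g : {f : Fin (ℓ + 1) → V // ∀ i : Fin ℓ, D (f i.castSucc) (f i.succ)} =>
          f = g ∨ ((∀ i : Fin ℓ, G.Adj (f.1 i.castSucc) (f.1 i.succ)) ∧
            ∀ i : Fin (ℓ + 1), g.1 i = f.1 i.rev))) =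
      Fintype.card V * (2 * (r + z) ^ ℓ - r ^ ℓ + r ^ (ℓ / 2)) := by
  classical
  obtain ⟨m, rfl⟩ := hℓ
  rw [rel_eq G D (m + m) hsub]
  rw [two_mul_card_quot _ (sigmaWalk_involutive G D (m + m) hsub)]
  have hGnbr : ∀ v, Nat.card {w // G.Adj v w} = r := by
    intro v
    have h1 : Nat.card {w // G.Adj v w} = Nat.card (G.neighborSet v) := rfl
    rw [h1, Nat.card_eq_fintype_card, SimpleGraph.card_neighborSet_eq_degree]
    exact hreg v
  have hS : Nat.card (MWk D (m + m)) = Fintype.card V * (r + z) ^ (m + m) :=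
    mwk_card D (r + z) (fun v => by rw [← hout v]; exact Nat.card_coe_set_eq _) (m + m)
  have hE : Nat.card {f : MWk D (m + m) //
      ∀ i : Fin (m + m), G.Adj (f.1 i.castSucc) (f.1 i.succ)}
      = Fintype.card V * r ^ (m + m) := by
    rw [Nat.card_congr (subwalk_equiv' (m + m) G.Adj D hsub)]
    exact mwk_card G.Adj r hGnbr (m + m)
  have hP : Nat.card {f : MWk D (m + m) //
      (∀ i : Fin (m + m), G.Adj (f.1 i.castSucc) (f.1 i.succ)) ∧
        ∀ i : Fin (m + m + 1), f.1 i = f.1 i.rev}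
      = Fintype.card V * r ^ m := by
    rw [Nat.card_congr (subwalk_equiv (m + m) G.Adj D hsub
      (fun F => ∀ i : Fin (m + m + 1), F i = F i.rev))]
    rw [Nat.card_congr (palin_equiv G.Adj (fun u v h => h.symm) m)]
    exact mwk_card G.Adj r hGnbr m
  have hdisj : Disjoint
      (fun f : MWk D (m + m) => ¬ ∀ i : Fin (m + m), G.Adj (f.1 i.castSucc) (f.1 i.succ))
      (fun f : MWk D (m + m) => (∀ i : Fin (m + m), G.Adj (f.1 i.castSucc) (f.1 i.succ)) ∧
        ∀ i : Fin (m + m + 1), f.1 i = f.1 i.rev) := by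
    rw [Pi.disjoint_iff]
    intro f
    rw [disjoint_iff_inf_le]
    rintro ⟨h1, h2, -⟩
    exact h1 h2
  have hFix : Nat.card {f : MWk D (m + m) // sigmaWalk G D (m + m) hsub f = f}
      = (Fintype.card V * (r + z) ^ (m + m) - Fintype.card V * r ^ (m + m))
        + Fintype.card V * r ^ m := by
    rw [Nat.card_congr (Equiv.subtypeEquivRight
      (fun f => sigmaWalk_fix_iff G D (m + m) hsub f))]
    rw [Nat.card_congr (subtypeOrEquiv _ _ hdisj)]
    have hNA : Nat.card {f : MWk D (m + m) //
        ¬ ∀ i : Fin (m + m), G.Adj (f.1 i.castSucc) (f.1 i.succ)}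
        = Fintype.card V * (r + z) ^ (m + m) - Fintype.card V * r ^ (m + m) := by
      have := Fintype.ofFinite (MWk D (m + m))
      rw [Nat.card_eq_fintype_card, Fintype.card_subtype_compl,
        ← Nat.card_eq_fintype_card, ← Nat.card_eq_fintype_card, hS, hE]
    rw [Nat.card_sum, hNA, hP]
  rw [hS, hFix]
  have hdiv : (m + m) / 2 = m := by omega
  rw [hdiv]
  have hle : Fintype.card V * r ^ (m + m) ≤ Fintype.card V * (r + z) ^ (m + m) :=
    Nat.mul_le_mul_left _ (Nat.pow_le_pow_left (Nat.le_add_right r z) _)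
  have h2X : Fintype.card V * (2 * (r + z) ^ (m + m))
      = 2 * (Fintype.card V * (r + z) ^ (m + m)) := by ring
  rw [Nat.mul_add, Nat.mul_sub]
  omega
end

section
/- Let G be a simple graph in which every vertex has degree at most 1. Then every walk in G of even length has palindromic support, i.e. w.support.reverse = w.support; in other words, every even-length walk whose steps are all edges of a graph of maximum degree 1 coincides with its own conjugate. (This is the key fact behind the isomorphism S^ℓ(G) ≅ L^ℓ(G) for mixed graphs of maximum undirected degree 1 and even ℓ.) -/
/-! A vertex of degree at most one has at most one neighbour, so any walk in such a graph
just bounces back and forth along a single edge: its `i`-th vertex depends only on the parity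
of `i`. When the length `n` is even, `n - i` and `i` have the same parity, so reading the walk
backwards gives the same sequence of vertices. -/

namespace SimpleGraph

variable {V : Type*} {G : SimpleGraph V}

lemma eq_of_adj_of_adj_of_degree_le_one {x a b : V} [Fintype (G.neighborSet x)]
    (hx : G.degree x ≤ 1) (ha : G.Adj x a) (hb : G.Adj x b) : a = b :=
  Finset.card_le_one.mp hx a (by simpa) b (by simpa)

namespace Walk

variable [∀ x, Fintype (G.neighborSet x)] {u v : V}

lemma getVert_add_two_of_degree_le_one (hdeg : ∀ x, G.degree x ≤ 1)
    (w : G.Walk u v) {i : ℕ} (hi : i + 2 ≤ w.length) : w.getVert (i + 2) = w.getVert i :=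
  eq_of_adj_of_adj_of_degree_le_one (hdeg _) (w.adj_getVert_succ (by omega))
    (w.adj_getVert_succ (by omega)).symm

lemma getVert_mod_two_of_degree_le_one (hdeg : ∀ x, G.degree x ≤ 1)
    (w : G.Walk u v) {i : ℕ} (hi : i ≤ w.length) : w.getVert (i % 2) = w.getVert i := by
  induction i using Nat.strong_induction_on with
  | _ i ih =>
    match i with
    | 0 | 1 => rfl
    | k + 2 =>
      rw [Nat.add_mod_right, ih k (by omega) (by omega),
        w.getVert_add_two_of_degree_le_one hdeg hi]

lemma getVert_length_sub_of_degree_le_one (hdeg : ∀ x, G.degree x ≤ 1)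
    (w : G.Walk u v) (h : Even w.length) {i : ℕ} (hi : i ≤ w.length) :
    w.getVert (w.length - i) = w.getVert i := by
  have hpar : (w.length - i) % 2 = i % 2 := by
    obtain ⟨k, hk⟩ := h
    omega
  rw [← w.getVert_mod_two_of_degree_le_one hdeg (Nat.sub_le _ _), hpar,
    w.getVert_mod_two_of_degree_le_one hdeg hi]

end Walk

end SimpleGraph

theorem walk_palindromic_of_max_degree_le_one_general {V : Type*} [Fintype V]
    (G : SimpleGraph V) [DecidableRel G.Adj] (hdeg : ∀ v : V, G.degree v ≤ 1)
    {u v : V} (w : G.Walk u v) (h : Even w.length) :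
    w.support.reverse = w.support := by
  refine List.ext_getElem List.length_reverse fun i hi _ => ?_
  have hi' : i ≤ w.length := by
    simpa [SimpleGraph.Walk.length_support, Nat.lt_succ_iff] using hi
  have hidx : w.support.length - 1 - i = w.length - i := by
    simp [SimpleGraph.Walk.length_support]
  simp only [List.getElem_reverse, hidx, SimpleGraph.Walk.support_getElem_eq_getVert]
  exact w.getVert_length_sub_of_degree_le_one hdeg h hi'

/-- In a simple graph of maximum degree at most `1`, every walk of even length has
palindromic support, i.e. coincides with its own conjugate. -/
theorem walk_palindromic_of_max_degree_le_one {V : Type*} [Fintype V] [DecidableEq V]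
    (G : SimpleGraph V) [DecidableRel G.Adj] (hdeg : ∀ v : V, G.degree v ≤ 1)
    {u v : V} (w : G.Walk u v) (h : Even w.length) :
    w.support.reverse = w.support :=
  walk_palindromic_of_max_degree_le_one_general G hdeg w h
end

section
/- Let D be a digraph on a vertex set V, and let k and ℓ be natural numbers. Assume that for every pair of vertices u, v ∈ V there exist m ≤ k and a D-walk of length m from u to v. Then for any two D-walks f and g of length ℓ, there exist m ≤ k + ℓ and a sequence h₀ = f, h₁, …, h_m = g of D-walks of length ℓ such that for each j < m the walk h_{j+1} is a shift of h_j, i.e. h_{j+1}(i) = h_j(i+1) for all 0 ≤ i ≤ ℓ − 1. (Equivalently: the diameter of the ℓ-iterated line digraph of D is at most k + ℓ when D has diameter at most k.) -/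
/-- Let `D` be a digraph on `V` of diameter at most `k` (between every pair of vertices
there is a `D`-walk of length `m ≤ k`). Then between any two `D`-walks `f`, `g` of
length `ℓ`, viewed as vertices of the `ℓ`-iterated line digraph `L^ℓ(D)`, there is a
sequence of at most `k + ℓ` shifts leading from `f` to `g`; that is, the diameter of
`L^ℓ(D)` is at most `k + ℓ`. -/
theorem line_digraph_diameter_le {V : Type*} (D : V → V → Prop) (k ℓ : ℕ)
    (hdiam : ∀ u v : V, ∃ m ≤ k, ∃ f : Fin (m + 1) → V,
      (∀ i : Fin m, D (f i.castSucc) (f i.succ)) ∧ f 0 = u ∧ f (Fin.last m) = v)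
    (f g : {f : Fin (ℓ + 1) → V // ∀ i : Fin ℓ, D (f i.castSucc) (f i.succ)}) :
    ∃ m ≤ k + ℓ, ∃ h : Fin (m + 1) →
        {f : Fin (ℓ + 1) → V // ∀ i : Fin ℓ, D (f i.castSucc) (f i.succ)},
      h 0 = f ∧ h (Fin.last m) = g ∧
        ∀ j : Fin m, ∀ i : Fin ℓ, (h j.succ).1 i.castSucc = (h j.castSucc).1 i.succ := by
  obtain ⟨m, hm, p, hp, hp0, hpl⟩ := hdiam (f.1 (Fin.last ℓ)) (g.1 0)
  -- The long walk W : f, then p, then g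
  set W : ℕ → V := fun t =>
    if ht : t ≤ ℓ then f.1 ⟨t, Nat.lt_succ_of_le ht⟩
    else if ht2 : t ≤ ℓ + m then p ⟨t - ℓ, by omega⟩
    else g.1 ⟨min (t - ℓ - m) ℓ, by omega⟩ with hWdef
  have hWf : ∀ t (h : t ≤ ℓ), W t = f.1 ⟨t, Nat.lt_succ_of_le h⟩ := by
    intro t h; simp [hWdef, h]
  have hWp : ∀ t (h1 : ℓ ≤ t) (h2 : t ≤ ℓ + m), W t = p ⟨t - ℓ, by omega⟩ := by
    intro t h1 h2
    rcases eq_or_lt_of_le h1 with h | h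
    · subst h
      rw [hWf ℓ le_rfl]
      have e : f.1 ⟨ℓ, Nat.lt_succ_of_le le_rfl⟩ = f.1 (Fin.last ℓ) := rfl
      rw [e, ← hp0]
      refine (congrArg p ?_).symm
      apply Fin.ext; simp
    · simp only [hWdef]
      rw [dif_neg (by omega), dif_pos h2]
  have hWg : ∀ t (h1 : ℓ + m ≤ t) (h2 : t ≤ ℓ + m + ℓ), W t = g.1 ⟨t - ℓ - m, by omega⟩ := by
    intro t h1 h2
    rcases eq_or_lt_of_le h1 with h | h
    · subst h
      rw [hWp (ℓ + m) (by omega) le_rfl]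
      have e : p ⟨ℓ + m - ℓ, by omega⟩ = p (Fin.last m) :=
        congrArg p (by apply Fin.ext; show ℓ + m - ℓ = m; omega)
      rw [e, hpl]
      refine (congrArg g.1 ?_).symm
      apply Fin.ext; simp
    · simp only [hWdef]
      rw [dif_neg (by omega), dif_neg (by omega)]
      exact congrArg g.1 (by apply Fin.ext; show min (t - ℓ - m) ℓ = t - ℓ - m; omega)
  have hadj : ∀ t, t < ℓ + m + ℓ → D (W t) (W (t + 1)) := by
    intro t ht
    rcases lt_or_ge t ℓ with h | h
    · rw [hWf t (by omega), hWf (t + 1) (by omega)]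
      exact f.2 ⟨t, h⟩
    · rcases lt_or_ge t (ℓ + m) with h2 | h2
      · have e1 : W t = p (⟨t - ℓ, by omega⟩ : Fin m).castSucc := by
          rw [hWp t h (by omega)]; rfl
        have e2 : W (t + 1) = p (⟨t - ℓ, by omega⟩ : Fin m).succ := by
          rw [hWp (t + 1) (by omega) (by omega)]
          exact congrArg p (by apply Fin.ext; show t + 1 - ℓ = t - ℓ + 1; omega)
        rw [e1, e2]; exact hp _
      · have e1 : W t = g.1 (⟨t - ℓ - m, by omega⟩ : Fin ℓ).castSucc := by
          rw [hWg t h2 (by omega)]; rfl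
        have e2 : W (t + 1) = g.1 (⟨t - ℓ - m, by omega⟩ : Fin ℓ).succ := by
          rw [hWg (t + 1) (by omega) (by omega)]
          exact congrArg g.1 (by apply Fin.ext; show t + 1 - ℓ - m = t - ℓ - m + 1; omega)
        rw [e1, e2]; exact g.2 _
  refine ⟨m + ℓ, by omega, fun j => ⟨fun i => W (j.1 + i.1), fun i => ?_⟩, ?_, ?_, ?_⟩
  · exact hadj (j.1 + i.1) (by have hj := j.2; have hi := i.2; omega)
  · apply Subtype.ext
    funext i
    show W (0 + i.1) = f.1 i
    rw [Nat.zero_add, hWf i.1 (by omega)]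
  · apply Subtype.ext
    funext i
    show W (m + ℓ + i.1) = g.1 i
    rw [hWg (m + ℓ + i.1) (by omega) (by have := i.2; omega)]
    exact congrArg g.1 (by apply Fin.ext; show m + ℓ + i.1 - ℓ - m = i.1; omega)
  · intro j i
    show W (j.1 + 1 + i.1) = W (j.1 + (i.1 + 1))
    congr 1
    omega
end

section
/- Let (G, D) be a mixed graph on a vertex set V, and let k and ℓ be natural numbers. Assume that for every pair of vertices u, v ∈ V there exist m ≤ k and a D-walk of length m from u to v. On the set of D-walks of length ℓ, consider the equivalence relation where f ∼ g iff f = g, or every step of f is an edge of G and g is the reverse of f; let adjacency between equivalence classes C and C' mean that there exist f ∈ C and g ∈ C' with g a shift of f (g(i) = f(i+1) for all 0 ≤ i ≤ ℓ−1). Then for any two equivalence classes C and C' there exist m ≤ k + ℓ and a sequence of classes C = C₀, C₁, …, C_m = C' with C_j adjacent to C_{j+1} for each j < m. (This is the bound k_ℓ ≤ k + ℓ for the diameter of the ℓ-sequence mixed graph S^ℓ(G) of a mixed graph G of diameter k.) -/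
/-!
Concatenate a representative of `C`, a `D`-walk of length `m ≤ k` from its last vertex to the
first vertex of a representative of `C'`, and that representative: this is a `D`-walk of length
`ℓ + m + ℓ`. Its `m + ℓ + 1` windows of length `ℓ` are `D`-walks, each a shift of the previous one,
and the first and last windows are the two representatives.
-/

section WalkSequences

variable {V : Type*} (D : V → V → Prop)

def IsWalkUpTo (s : ℕ → V) (n : ℕ) : Prop :=
  ∀ i < n, D (s i) (s (i + 1))

abbrev DWalk (ℓ : ℕ) : Type _ :=
  {f : Fin (ℓ + 1) → V // ∀ i : Fin ℓ, D (f i.castSucc) (f i.succ)}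

variable {D}

def Fin.extendByLast {a : ℕ} (f : Fin (a + 1) → V) (n : ℕ) : V :=
  f (Fin.clamp n a)

def seqAppend (s : ℕ → V) (a : ℕ) (t : ℕ → V) (n : ℕ) : V :=
  if n ≤ a then s n else t (n - a)

def window (s : ℕ → V) (ℓ j : ℕ) (i : Fin (ℓ + 1)) : V :=
  s (j + i)

def IsShift {ℓ : ℕ} (f g : Fin (ℓ + 1) → V) : Prop :=
  ∀ i : Fin ℓ, g i.castSucc = f i.succ

theorem Fin.extendByLast_of_le {a n : ℕ} (f : Fin (a + 1) → V) (hn : n ≤ a) :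
    Fin.extendByLast f n = f ⟨n, Nat.lt_succ_of_le hn⟩ := by
  simp [Fin.extendByLast, Fin.clamp, Nat.min_eq_left hn]

theorem Fin.extendByLast_zero {a : ℕ} (f : Fin (a + 1) → V) : Fin.extendByLast f 0 = f 0 :=
  Fin.extendByLast_of_le f (Nat.zero_le a)

theorem Fin.extendByLast_self {a : ℕ} (f : Fin (a + 1) → V) :
    Fin.extendByLast f a = f (Fin.last a) :=
  Fin.extendByLast_of_le f le_rfl

theorem isWalkUpTo_extendByLast {a : ℕ} {f : Fin (a + 1) → V}
    (hf : ∀ i : Fin a, D (f i.castSucc) (f i.succ)) : IsWalkUpTo D (Fin.extendByLast f) a := by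
  intro i hi
  rw [Fin.extendByLast_of_le f hi.le, Fin.extendByLast_of_le f hi]
  exact hf ⟨i, hi⟩

theorem seqAppend_of_le {s t : ℕ → V} {a n : ℕ} (hn : n ≤ a) : seqAppend s a t n = s n :=
  if_pos hn

theorem seqAppend_add {s t : ℕ → V} {a : ℕ} (hst : s a = t 0) (n : ℕ) :
    seqAppend s a t (a + n) = t n := by
  rcases Nat.eq_zero_or_pos n with rfl | hn
  · simpa [seqAppend] using hst
  · simp [seqAppend, show ¬a + n ≤ a by omega]

theorem IsWalkUpTo.seqAppend {s t : ℕ → V} {a b : ℕ} (hs : IsWalkUpTo D s a)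
    (ht : IsWalkUpTo D t b) (hst : s a = t 0) : IsWalkUpTo D (seqAppend s a t) (a + b) := by
  intro i hi
  rcases Nat.lt_or_ge i a with hia | hai
  · rw [seqAppend_of_le hia.le, seqAppend_of_le hia]
    exact hs i hia
  · obtain ⟨n, rfl⟩ := Nat.exists_eq_add_of_le hai
    rw [seqAppend_add hst, Nat.add_assoc, seqAppend_add hst]
    exact ht n (by omega)

theorem IsWalkUpTo.window_step {s : ℕ → V} {n ℓ j : ℕ} (hs : IsWalkUpTo D s n) (hj : j + ℓ ≤ n) :
    ∀ i : Fin ℓ, D (window s ℓ j i.castSucc) (window s ℓ j i.succ) :=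
  fun i => hs (j + i) (by omega)

theorem isShift_window (s : ℕ → V) (ℓ j : ℕ) : IsShift (window s ℓ j) (window s ℓ (j + 1)) :=
  fun i => congrArg s (by simp only [Fin.val_castSucc, Fin.val_succ]; omega)

theorem IsWalkUpTo.exists_shift_path {ℓ L : ℕ} {r : DWalk D ℓ → DWalk D ℓ → Prop} {s : ℕ → V}
    (hs : IsWalkUpTo D s (L + ℓ)) {f₀ f₁ : DWalk D ℓ} (h₀ : window s ℓ 0 = f₀.1)
    (h₁ : window s ℓ L = f₁.1) :
    ∃ h : Fin (L + 1) → Quot r, h 0 = Quot.mk r f₀ ∧ h (Fin.last L) = Quot.mk r f₁ ∧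
      ∀ j : Fin L, ∃ f g : DWalk D ℓ, Quot.mk r f = h j.castSucc ∧ Quot.mk r g = h j.succ ∧
        IsShift f.1 g.1 := by
  let w (j : Fin (L + 1)) : DWalk D ℓ := ⟨window s ℓ j, hs.window_step (by omega)⟩
  refine ⟨fun j => Quot.mk r (w j), ?_, ?_, fun j => ⟨w j.castSucc, w j.succ, rfl, rfl, ?_⟩⟩
  · exact congrArg _ (Subtype.ext h₀)
  · exact congrArg _ (Subtype.ext h₁)
  · exact isShift_window s ℓ j

end WalkSequences

theorem sequence_mixed_graph_diameter_le_general {V : Type*}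
    (G : SimpleGraph V) (D : V → V → Prop)
    (k ℓ : ℕ)
    (hdiam : ∀ u v : V, ∃ m ≤ k, ∃ f : Fin (m + 1) → V,
      (∀ i : Fin m, D (f i.castSucc) (f i.succ)) ∧ f 0 = u ∧ f (Fin.last m) = v)
    (C C' : Quot (fun f g : {f : Fin (ℓ + 1) → V // ∀ i : Fin ℓ, D (f i.castSucc) (f i.succ)} =>
        f = g ∨ ((∀ i : Fin ℓ, G.Adj (f.1 i.castSucc) (f.1 i.succ)) ∧
          ∀ i : Fin (ℓ + 1), g.1 i = f.1 i.rev))) :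
    ∃ m ≤ k + ℓ, ∃ h : Fin (m + 1) →
        Quot (fun f g : {f : Fin (ℓ + 1) → V // ∀ i : Fin ℓ, D (f i.castSucc) (f i.succ)} =>
          f = g ∨ ((∀ i : Fin ℓ, G.Adj (f.1 i.castSucc) (f.1 i.succ)) ∧
            ∀ i : Fin (ℓ + 1), g.1 i = f.1 i.rev)),
      h 0 = C ∧ h (Fin.last m) = C' ∧
        ∀ j : Fin m, ∃ f g : {f : Fin (ℓ + 1) → V // ∀ i : Fin ℓ, D (f i.castSucc) (f i.succ)},
          Quot.mk _ f = h j.castSucc ∧ Quot.mk _ g = h j.succ ∧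
            ∀ i : Fin ℓ, g.1 i.castSucc = f.1 i.succ := by
  obtain ⟨f, rfl⟩ := C.exists_rep
  obtain ⟨f', rfl⟩ := C'.exists_rep
  obtain ⟨m, hm, w, hw, hw₀, hw₁⟩ := hdiam (f.1 (Fin.last ℓ)) (f'.1 0)
  let s₁ := seqAppend (Fin.extendByLast f.1) ℓ (Fin.extendByLast w)
  have hfw : Fin.extendByLast f.1 ℓ = Fin.extendByLast w 0 := by
    rw [Fin.extendByLast_self, Fin.extendByLast_zero, hw₀]
  have hs₁ : s₁ (ℓ + m) = Fin.extendByLast f'.1 0 :=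
    calc s₁ (ℓ + m) = Fin.extendByLast w m := seqAppend_add hfw m
      _ = Fin.extendByLast f'.1 0 := by rw [Fin.extendByLast_self, Fin.extendByLast_zero, hw₁]
  let s := seqAppend s₁ (ℓ + m) (Fin.extendByLast f'.1)
  have hs : IsWalkUpTo D s (m + ℓ + ℓ) := by
    rw [Nat.add_comm m ℓ]
    exact ((isWalkUpTo_extendByLast f.2).seqAppend (isWalkUpTo_extendByLast hw) hfw).seqAppend
      (isWalkUpTo_extendByLast f'.2) hs₁
  refine ⟨m + ℓ, by omega, hs.exists_shift_path ?_ ?_⟩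
  · funext i
    have hi : (i : ℕ) ≤ ℓ := i.is_le
    simp only [window, Nat.zero_add, s, s₁, seqAppend_of_le (hi.trans (Nat.le_add_right ℓ m)),
      seqAppend_of_le hi, Fin.extendByLast_of_le _ hi]
  · funext i
    simp only [window, s, Nat.add_comm m ℓ, seqAppend_add hs₁, Fin.extendByLast_of_le _ i.is_le]

/-- Let `(G, D)` be a mixed graph on `V` (`D` a digraph containing the simple graph `G`)
of diameter at most `k` (between every pair of vertices there is a `D`-walk of length
`m ≤ k`). The vertices of the `ℓ`-sequence mixed graph `S^ℓ(G)` are the equivalence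
classes of `D`-walks of length `ℓ` under identifying each all-edge walk with its reverse,
and a class `C` is adjacent to a class `C'` when some `g ∈ C'` is a shift of some
`f ∈ C`. Then any two classes are joined by a sequence of at most `k + ℓ` adjacencies;
that is, the diameter of `S^ℓ(G)` is at most `k + ℓ`. -/
theorem sequence_mixed_graph_diameter_le {V : Type*}
    (G : SimpleGraph V) (D : V → V → Prop)
    (hsub : ∀ u v : V, G.Adj u v → D u v) (k ℓ : ℕ)
    (hdiam : ∀ u v : V, ∃ m ≤ k, ∃ f : Fin (m + 1) → V,
      (∀ i : Fin m, D (f i.castSucc) (f i.succ)) ∧ f 0 = u ∧ f (Fin.last m) = v)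
    (C C' : Quot (fun f g : {f : Fin (ℓ + 1) → V // ∀ i : Fin ℓ, D (f i.castSucc) (f i.succ)} =>
        f = g ∨ ((∀ i : Fin ℓ, G.Adj (f.1 i.castSucc) (f.1 i.succ)) ∧
          ∀ i : Fin (ℓ + 1), g.1 i = f.1 i.rev))) :
    ∃ m ≤ k + ℓ, ∃ h : Fin (m + 1) →
        Quot (fun f g : {f : Fin (ℓ + 1) → V // ∀ i : Fin ℓ, D (f i.castSucc) (f i.succ)} =>
          f = g ∨ ((∀ i : Fin ℓ, G.Adj (f.1 i.castSucc) (f.1 i.succ)) ∧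
            ∀ i : Fin (ℓ + 1), g.1 i = f.1 i.rev)),
      h 0 = C ∧ h (Fin.last m) = C' ∧
        ∀ j : Fin m, ∃ f g : {f : Fin (ℓ + 1) → V // ∀ i : Fin ℓ, D (f i.castSucc) (f i.succ)},
          Quot.mk _ f = h j.castSucc ∧ Quot.mk _ g = h j.succ ∧
            ∀ i : Fin ℓ, g.1 i.castSucc = f.1 i.succ :=
  sequence_mixed_graph_diameter_le_general G D k ℓ hdiam C C'
end

section
/- Let D be a digraph on a finite vertex set V such that every vertex has exactly z out-neighbors and exactly z in-neighbors, and let r' be a natural number with r' ≤ z. Then there exists a digraph D' on V with D'.Adj u v → D.Adj u v for all u, v, such that every vertex has exactly r' out-neighbors and exactly r' in-neighbors in D'. (That is, every z-regular digraph contains a spanning r'-regular subdigraph, an r'-factor.) -/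
open Classical in
lemma digraph_ncard_eq_filter {V : Type*} [Fintype V] (p : V → Prop) :
    {w : V | p w}.ncard = (Finset.univ.filter p).card := by
  rw [Set.ncard_eq_toFinset_card']
  congr 1
  ext w
  simp

open Classical in
lemma digraph_one_factor {V : Type*} [Fintype V] (D : V → V → Prop) (z : ℕ) (hz : 1 ≤ z)
    (hreg : ∀ v : V, {w : V | D v w}.ncard = z ∧ {u : V | D u v}.ncard = z) :
    ∃ f : V ≃ V, ∀ v, D v (f v) := by
  set t : V → Finset V := fun v => Finset.univ.filter (fun w => D v w) with ht
  have htcard : ∀ v, (t v).card = z := by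
    intro v
    rw [← digraph_ncard_eq_filter (fun w => D v w)]
    exact (hreg v).1
  have hincard : ∀ w, (Finset.univ.filter (fun v => D v w)).card = z := by
    intro w
    rw [← digraph_ncard_eq_filter (fun v => D v w)]
    exact (hreg w).2
  have hall : ∀ s : Finset V, s.card ≤ (s.biUnion t).card := by
    intro s
    set B := s.biUnion t with hB
    have key : z * s.card ≤ z * B.card := by
      have h1 : ∑ v ∈ s, (t v).card = z * s.card := by
        rw [Finset.sum_congr rfl (fun v _ => htcard v)]
        simp [mul_comm]
      have h2 : ∑ v ∈ s, (t v).card = ∑ w ∈ B, (s.filter (fun v => D v w)).card := by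
        have : ∀ v ∈ s, (t v).card = (B.filter (fun w => D v w)).card := by
          intro v hv
          congr 1
          ext w
          simp only [ht, Finset.mem_filter, Finset.mem_univ, true_and, hB,
            Finset.mem_biUnion]
          constructor
          · intro h; exact ⟨⟨v, hv, by simp [ht, h]⟩, h⟩
          · tauto
        rw [Finset.sum_congr rfl this]
        simp only [Finset.card_filter]
        rw [Finset.sum_comm]
      have h3 : ∑ w ∈ B, (s.filter (fun v => D v w)).card ≤ z * B.card := by
        calc ∑ w ∈ B, (s.filter (fun v => D v w)).card
            ≤ ∑ w ∈ B, z := by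
              apply Finset.sum_le_sum
              intro w _
              rw [← hincard w]
              exact Finset.card_le_card (Finset.filter_subset_filter _ (Finset.subset_univ s))
          _ = z * B.card := by simp [mul_comm]
      omega
    exact Nat.le_of_mul_le_mul_left key hz
  obtain ⟨f, hinj, hf⟩ := (Finset.all_card_le_biUnion_card_iff_exists_injective t).mp hall
  refine ⟨Equiv.ofBijective f (Finite.injective_iff_bijective.mp hinj), fun v => ?_⟩
  have := hf v
  simp only [ht, Finset.mem_filter] at this
  exact this.2

lemma digraph_factor_aux {V : Type*} [Fintype V] (z : ℕ) :
    ∀ (D : V → V → Prop) (r' : ℕ), r' ≤ z →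
    (∀ v : V, {w : V | D v w}.ncard = z ∧ {u : V | D u v}.ncard = z) →
    ∃ D' : V → V → Prop, (∀ u v : V, D' u v → D u v) ∧
      ∀ v : V, {w : V | D' v w}.ncard = r' ∧ {u : V | D' u v}.ncard = r' := by
  induction z with
  | zero =>
    intro D r' hr' hreg
    refine ⟨fun _ _ => False, by simp, fun v => ?_⟩
    interval_cases r'
    simp
  | succ z ih =>
    intro D r' hr' hreg
    rcases eq_or_lt_of_le hr' with h | h
    · exact ⟨D, fun _ _ h => h, fun v => h ▸ hreg v⟩
    · obtain ⟨f, hf⟩ := digraph_one_factor D (z + 1) (by omega) hreg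
      set D₂ : V → V → Prop := fun u w => D u w ∧ w ≠ f u with hD₂
      have hreg₂ : ∀ v : V, {w : V | D₂ v w}.ncard = z ∧ {u : V | D₂ u v}.ncard = z := by
        intro v
        constructor
        · have hset : {w : V | D₂ v w} = {w : V | D v w} \ {f v} := by
            ext w; simp [hD₂]
          rw [hset, Set.ncard_diff_singleton_of_mem (show f v ∈ {w : V | D v w} from hf v), (hreg v).1]
          omega
        · have hset : {u : V | D₂ u v} = {u : V | D u v} \ {f.symm v} := by
            ext u
            simp only [hD₂, Set.mem_setOf_eq, Set.mem_diff, Set.mem_singleton_iff]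
            constructor
            · rintro ⟨h1, h2⟩
              exact ⟨h1, fun he => h2 (by rw [he]; simp)⟩
            · rintro ⟨h1, h2⟩
              refine ⟨h1, fun he => h2 ?_⟩
              rw [he]; simp
          have hmem : f.symm v ∈ {u : V | D u v} := by
            have := hf (f.symm v)
            simpa using this
          rw [hset, Set.ncard_diff_singleton_of_mem hmem, (hreg v).2]
          omega
      obtain ⟨D', hsub, hD'⟩ := ih D₂ r' (by omega) hreg₂
      exact ⟨D', fun u w h => (hsub u w h).1, hD'⟩

/-- Every `z`-regular digraph `D` on a finite vertex set (every vertex has exactly `z`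
out-neighbors and exactly `z` in-neighbors) contains, for every `r' ≤ z`, a spanning
`r'`-regular subdigraph (an `r'`-factor): a digraph `D'` with `D'.Adj ⊆ D.Adj` in which
every vertex has exactly `r'` out-neighbors and exactly `r'` in-neighbors. -/
theorem regular_digraph_has_factor {V : Type*} [Fintype V] (D : V → V → Prop)
    (z r' : ℕ) (hr' : r' ≤ z)
    (hreg : ∀ v : V, {w : V | D v w}.ncard = z ∧ {u : V | D u v}.ncard = z) :
    ∃ D' : V → V → Prop, (∀ u v : V, D' u v → D u v) ∧
      ∀ v : V, {w : V | D' v w}.ncard = r' ∧ {u : V | D' u v}.ncard = r' :=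
  digraph_factor_aux z D r' hr' hreg
end
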